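/- arXiv:1309.2005 — 2 statements merged into one kernel-verified Lean document; each statement's English description precedes it below -/
import Mathlib

section
/- Under the hyperbolic hypotheses, every point of K is contained in exactly H₂ tangent hyperplanes, and every point of PG(2n+1,q) not in K is contained in exactly H₁ tangent hyperplanes. -/
open Module Submodule Finset

lemma aux_ker_smul {F M : Type*} [Field F] [AddCommGroup M] [Module F M]
    (φ : M →ₗ[F] F) {c : F} (hc : c ≠ 0) : LinearMap.ker (c • φ) = LinearMap.ker φ := by
  ext u; simp [LinearMap.mem_ker, smul_eq_mul, mul_eq_zero, hc]

lemma aux_eq_smul_of_ker_eq {F M : Type*} [Field F] [AddCommGroup M] [Module F M]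
    {φ ψ : M →ₗ[F] F} (hφ : φ ≠ 0) (h : LinearMap.ker ψ = LinearMap.ker φ) :
    ∃ c : F, c ≠ 0 ∧ ψ = c • φ := by
  obtain ⟨v, hv⟩ : ∃ v, φ v ≠ 0 := by
    by_contra h'; push_neg at h'
    exact hφ (LinearMap.ext fun u => by simp [h' u])
  have hvψ : ψ v ≠ 0 := by
    intro h0
    have : v ∈ LinearMap.ker φ := h ▸ (LinearMap.mem_ker.mpr h0)
    exact hv this
  refine ⟨ψ v * (φ v)⁻¹, by simp [hvψ, hv], ?_⟩
  ext u
  have hw : (u - (φ u * (φ v)⁻¹) • v) ∈ LinearMap.ker φ := by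
    simp only [LinearMap.mem_ker, map_sub, map_smul, smul_eq_mul]
    field_simp
    ring
  rw [← h] at hw
  have hw2 : ψ u = (φ u * (φ v)⁻¹) * ψ v := by
    have := LinearMap.mem_ker.mp hw
    simp only [map_sub, map_smul, smul_eq_mul, sub_eq_zero] at this
    exact this
  simp only [LinearMap.smul_apply, smul_eq_mul]
  rw [hw2]; ring

lemma aux_exists_ker {F M : Type*} [Field F] [AddCommGroup M] [Module F M]
    [FiniteDimensional F M] (W : Submodule F M)
    (hW : Module.finrank F W + 1 = Module.finrank F M) :
    ∃ φ : M →ₗ[F] F, φ ≠ 0 ∧ LinearMap.ker φ = W := by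
  have hq : Module.finrank F (M ⧸ W) = 1 := by
    have := W.finrank_quotient_add_finrank
    omega
  obtain ⟨e⟩ := FiniteDimensional.nonempty_linearEquiv_of_finrank_eq
    (by rw [hq, Module.finrank_self] : Module.finrank F (M ⧸ W) = Module.finrank F F)
  set φ := e.toLinearMap ∘ₗ W.mkQ with hφdef
  have hker : LinearMap.ker φ = W := by
    rw [hφdef, LinearMap.ker_comp, LinearEquiv.ker, Submodule.comap_bot, Submodule.ker_mkQ]
  refine ⟨φ, ?_, hker⟩
  intro h0
  rw [h0, LinearMap.ker_zero] at hker
  rw [← hker, finrank_top] at hW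
  omega

lemma aux_finrank_ker {F M : Type*} [Field F] [AddCommGroup M] [Module F M]
    [FiniteDimensional F M] (φ : M →ₗ[F] F) (hφ : φ ≠ 0) :
    Module.finrank F (LinearMap.ker φ) + 1 = Module.finrank F M := by
  obtain ⟨v, hv⟩ : ∃ v, φ v ≠ 0 := by
    by_contra h'; push_neg at h'
    exact hφ (LinearMap.ext fun u => by simp [h' u])
  have hsurj : Function.Surjective φ := by
    intro a
    exact ⟨(a * (φ v)⁻¹) • v, by rw [map_smul, smul_eq_mul, mul_assoc, inv_mul_cancel₀ hv, mul_one]⟩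
  have hr : LinearMap.range φ = ⊤ := LinearMap.range_eq_top.mpr hsurj
  have := LinearMap.finrank_range_add_finrank_ker φ
  rw [hr, finrank_top, Module.finrank_self] at this
  omega


section
variable {F M : Type*} [Field F] [Fintype F] [AddCommGroup M] [Module F M]
  [FiniteDimensional F M]

lemma aux_count_hyperplanes (m : ℕ) (hm : Module.finrank F M = m) :
    {W : Submodule F M | Module.finrank F W + 1 = m}.ncard * (Fintype.card F - 1)
      = Fintype.card F ^ m - 1 := by
  classical
  haveI : Finite M := Module.finite_of_finite F
  haveI : Fintype M := Fintype.ofFinite M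
  haveI : Finite (M →ₗ[F] F) := Finite.of_injective _ (DFunLike.coe_injective (F := M →ₗ[F] F))
  haveI : Fintype (M →ₗ[F] F) := Fintype.ofFinite _
  haveI : Finite (Submodule F M) := Finite.of_injective _ SetLike.coe_injective
  haveI : Fintype (Submodule F M) := Fintype.ofFinite _
  set q := Fintype.card F with hq
  set s : Finset (M →ₗ[F] F) := Finset.univ.filter (· ≠ 0) with hs
  set t : Finset (Submodule F M) :=
    Finset.univ.filter (fun W => Module.finrank F W + 1 = m) with ht
  have hcards : s.card = q ^ m - 1 := by
    have h1 : s = Finset.univ.erase 0 := by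
      rw [hs, Finset.filter_ne']
    rw [h1, Finset.card_erase_of_mem (Finset.mem_univ _), Finset.card_univ]
    congr 1
    have : Fintype.card (M →ₗ[F] F) = q ^ Module.finrank F (M →ₗ[F] F) :=
      card_eq_pow_finrank (K := F)
    rw [this, Subspace.dual_finrank_eq, hm]
  have hmap : ∀ φ ∈ s, LinearMap.ker φ ∈ t := by
    intro φ hφ
    simp only [hs, Finset.mem_filter] at hφ
    simp only [ht, Finset.mem_filter]
    exact ⟨Finset.mem_univ _, by rw [← hm]; exact aux_finrank_ker φ hφ.2⟩
  have hfib : ∀ W ∈ t, (s.filter (fun φ => LinearMap.ker φ = W)).card = q - 1 := by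
    intro W hW
    simp only [ht, Finset.mem_filter] at hW
    obtain ⟨φ₀, hφ₀, hkφ₀⟩ := aux_exists_ker W (by rw [hm]; exact hW.2)
    have himg : s.filter (fun φ => LinearMap.ker φ = W)
        = (Finset.univ.filter (fun c : F => c ≠ 0)).image (fun c => c • φ₀) := by
      ext ψ
      simp only [Finset.mem_filter, Finset.mem_image, Finset.mem_univ, true_and, hs]
      constructor
      · rintro ⟨hψ0, hψ⟩
        obtain ⟨c, hc, rfl⟩ := aux_eq_smul_of_ker_eq hφ₀ (by rw [hψ, hkφ₀])
        exact ⟨c, hc, rfl⟩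
      · rintro ⟨c, hc, rfl⟩
        refine ⟨?_, by rw [aux_ker_smul φ₀ hc, hkφ₀]⟩
        intro h0
        obtain ⟨v, hv⟩ : ∃ v, φ₀ v ≠ 0 := by
          by_contra h'; push_neg at h'
          exact hφ₀ (LinearMap.ext fun u => by simp [h' u])
        have := LinearMap.congr_fun h0 v
        simp only [LinearMap.smul_apply, smul_eq_mul, LinearMap.zero_apply,
          mul_eq_zero] at this
        tauto
    rw [himg, Finset.card_image_of_injective _ (smul_left_injective F hφ₀),
      Finset.filter_ne', Finset.card_erase_of_mem (Finset.mem_univ _), Finset.card_univ]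
  have hsum := Finset.card_eq_sum_card_fiberwise hmap
  rw [hcards] at hsum
  have hset : {W : Submodule F M | Module.finrank F W + 1 = m}.toFinset = t := by
    ext W; simp [ht]
  rw [Set.ncard_eq_toFinset_card', hset, hsum,
    Finset.sum_congr rfl hfib, Finset.sum_const, smul_eq_mul]

lemma aux_count_hyperplanes_above (d r : ℕ) (hd : Module.finrank F M = d)
    (U : Submodule F M) (hU : Module.finrank F U = r) (hr : r < d) :
    {W : Submodule F M | Module.finrank F W + 1 = d ∧ U ≤ W}.ncard * (Fintype.card F - 1)
      = Fintype.card F ^ (d - r) - 1 := by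
  classical
  have hQ : Module.finrank F (M ⧸ U) = d - r := by
    have := U.finrank_quotient_add_finrank
    omega
  have hUC : ∀ W' : Submodule F (M ⧸ U), U ≤ Submodule.comap U.mkQ W' := by
    intro W' x hx
    simp only [Submodule.mem_comap, Submodule.mkQ_apply]
    rw [(Submodule.Quotient.mk_eq_zero U).mpr hx]
    exact W'.zero_mem
  have hinj : Function.Injective (fun W' : Submodule F (M ⧸ U) => Submodule.comap U.mkQ W') :=
    Submodule.comap_injective_of_surjective (Submodule.mkQ_surjective U)
  have hfr : ∀ W' : Submodule F (M ⧸ U),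
      Module.finrank F (Submodule.comap U.mkQ W') = Module.finrank F W' + r := by
    intro W'
    have hψ := LinearMap.finrank_range_add_finrank_ker
      (U.mkQ.comp (Submodule.comap U.mkQ W').subtype)
    rw [LinearMap.range_comp, Submodule.range_subtype, LinearMap.ker_comp,
      Submodule.ker_mkQ, Submodule.map_comap_eq_of_surjective (Submodule.mkQ_surjective U)]
      at hψ
    have h2 : Module.finrank F (Submodule.comap (Submodule.comap U.mkQ W').subtype U) = r := by
      rw [← hU]
      exact LinearEquiv.finrank_eq (Submodule.comapSubtypeEquivOfLe (hUC W'))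
    omega
  have himg : (fun W' : Submodule F (M ⧸ U) => Submodule.comap U.mkQ W') ''
      {W' : Submodule F (M ⧸ U) | Module.finrank F W' + 1 = d - r}
      = {W : Submodule F M | Module.finrank F W + 1 = d ∧ U ≤ W} := by
    ext W
    constructor
    · rintro ⟨W', hW', rfl⟩
      simp only [Set.mem_setOf_eq] at hW' ⊢
      exact ⟨by rw [hfr]; omega, hUC W'⟩
    · rintro ⟨h1, h2⟩
      refine ⟨Submodule.map U.mkQ W, ?_, ?_⟩
      · have hcm : Submodule.comap U.mkQ (Submodule.map U.mkQ W) = W := by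
          rw [Submodule.comap_map_eq, Submodule.ker_mkQ, sup_eq_left.mpr h2]
        have := hfr (Submodule.map U.mkQ W)
        rw [hcm] at this
        simp only [Set.mem_setOf_eq]
        omega
      · show Submodule.comap U.mkQ (Submodule.map U.mkQ W) = W
        rw [Submodule.comap_map_eq, Submodule.ker_mkQ, sup_eq_left.mpr h2]
  rw [← himg, Set.ncard_image_of_injective _ hinj]
  exact aux_count_hyperplanes (d - r) hQ
end

lemma aux_arith (q x h1 h2 N T T' A B k : ℤ)
    (hq3 : 3 ≤ q) (hx : q^2 ≤ x)
    (hv1 : (q-1)*h1 = x*x-1) (hv2 : (q-1)*h2 = x*x-1+(q-1)*x)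
    (f0 : (q-1)*N = q*q*x*x-1)
    (f1 : (q-1)*A = k*(q*x*x-1))
    (f2 : A = T*h2 + T'*h1)
    (f3 : T + T' = N)
    (f4 : (q-1)*B = (k*k-k)*(x*x-1))
    (f5 : B = T*(h2*h2-h2) + T'*(h1*h1-h1))
    (hdvd : (q-1) ∣ (q*x*x-1)) :
    (q-1)*k = q*x*x-1 + (q-1)*x := by
  have hx9 : (9:ℤ) ≤ x := by nlinarith
  have hq' : (q-1)^2 < x+1 := by nlinarith
  have hlt : (q-1)^2*(x-1) < x*x-1 := by
    calc (q-1)^2*(x-1) < (x+1)*(x-1) := by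
          exact mul_lt_mul_of_pos_right hq' (by omega)
      _ = x*x-1 := by ring
  have hpos : 0 < (q-1)^2*(x-1) :=
    mul_pos (pow_pos (by omega : (0:ℤ) < q-1) 2) (by omega)
  have u1 : N*(x*x-1) + T*((q-1)*x) = k*(q*x*x-1) := by
    linear_combination f1 - (q-1)*f2 - T*hv2 - T'*hv1 - (x*x-1)*f3
  have u2 : N*((x*x-1)^2-(q-1)*(x*x-1)) + T*((q-1)*x)*(2*(x*x-1)+(q-1)*x-(q-1))
      = (q-1)*(k*k-k)*(x*x-1) := by
    linear_combination (q-1)*f4 - (q-1)^2*f5 - T*((q-1)*h2+(x*x-1)+(q-1)*x-(q-1))*hv2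
      - T'*((q-1)*h1+(x*x-1)-(q-1))*hv1 - ((x*x-1)^2-(q-1)*(x*x-1))*f3
  have v1 : T*((q-1)*(q-1)*x) = (q-1)*k*(q*x*x-1) - (q*q*x*x-1)*(x*x-1) := by
    linear_combination (q-1)*u1 - (x*x-1)*f0
  have v2 : (q*q*x*x-1)*((x*x-1)^2-(q-1)*(x*x-1))
      + ((q-1)*k*(q*x*x-1)-(q*q*x*x-1)*(x*x-1))*(2*(x*x-1)+(q-1)*x-(q-1))
      = (q-1)*(q-1)*(k*k-k)*(x*x-1) := by
    linear_combination (q-1)*u2 - ((x*x-1)^2-(q-1)*(x*x-1))*f0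
      - (2*(x*x-1)+(q-1)*x-(q-1))*v1
  obtain ⟨s1, hs1⟩ := hdvd
  have hk0 : (q-1)*(s1+x) = q*x*x-1 + (q-1)*x := by linear_combination -hs1
  set k0 : ℤ := s1 + x with hk0def
  have G : (k - k0) * ((q-1)^2*(x*x-1)*(k+k0-1)
      - (q-1)*(q*x*x-1)*(2*(x*x-1)+(q-1)*x-(q-1))) = 0 := by
    linear_combination (-1)*v2 + (1 - k0 - 2*x^2 + x^2*k0 + x^3 + q*k0 + q*x^2
      - q*x^2*k0 - 2*q*x^3 + q*x^4 - q^2*x^2 + q^2*x^3)*hk0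
  rcases mul_eq_zero.mp G with h | h
  · linear_combination (q-1)*h + hk0
  · exfalso
    have hdv : (x*x-1) * ((q-1)*(k+k0-1) - q*(2*(x*x-1)+(q-1)*x-(q-1)) - 2*(q-1))
        = (q-1)^2*(x-1) := by
      apply mul_left_cancel₀ (show (q-1:ℤ) ≠ 0 by omega)
      linear_combination h
    have := Int.le_of_dvd hpos ⟨_, hdv.symm⟩
    linarith

lemma aux_arith2 (q x h1 h2 NP TP TP' AP k eps : ℤ)
    (hq3 : 3 ≤ q) (hx : q^2 ≤ x)
    (hv1 : (q-1)*h1 = x*x-1) (hv2 : (q-1)*h2 = x*x-1+(q-1)*x)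
    (hkval : (q-1)*k = q*x*x-1 + (q-1)*x)
    (w0 : (q-1)*NP = q*x*x-1)
    (w1 : AP = TP*h2 + TP'*h1)
    (w3 : TP + TP' = NP)
    (w2 : (q-1)*AP = eps*(q*x*x-1) + (k-eps)*(x*x-1)) :
    TP = eps*x + h1 := by
  have hx9 : (9:ℤ) ≤ x := by nlinarith
  have hc0 : (q-1:ℤ) ≠ 0 := by omega
  have hx0 : (x:ℤ) ≠ 0 := by omega
  have p1 : NP*(x*x-1) + TP*((q-1)*x) = eps*(q*x*x-1) + (k-eps)*(x*x-1) := by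
    linear_combination w2 - (q-1)*w1 - TP*hv2 - TP'*hv1 - (x*x-1)*w3
  have g2 : TP*((q-1)*(q-1)*x) = (q-1)*eps*((q-1)*x*x) + (q-1)*x*(x*x-1) := by
    linear_combination (q-1)*p1 - (x*x-1)*w0 + (x*x-1)*hkval
  have g3 : TP*((q-1)*x) = eps*((q-1)*x*x) + x*(x*x-1) := by
    apply mul_left_cancel₀ hc0
    linear_combination g2
  have g4 : TP*(q-1) = eps*((q-1)*x) + (x*x-1) := by
    apply mul_left_cancel₀ hx0
    linear_combination g3
  apply mul_left_cancel₀ hc0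
  linear_combination g4 - hv1

theorem stmt_11
    (q n : ℕ) (hq : 2 < q) (hn : 2 ≤ n)
    (F : Type*) [Field F] [Fintype F] (hF : Fintype.card F = q)
    (K : Set (Submodule F (Fin (2 * n + 2) → F)))
    (hK : ∀ P ∈ K, Module.finrank F P = 1)
    (H₁ H₂ C₁ C₂ C₃ C₄ : ℕ)
    (hH₁ : (H₁ : ℤ) = ((q : ℤ) ^ (2 * n) - 1) / ((q : ℤ) - 1))
    (hH₂ : (H₂ : ℤ) = 1 + (q : ℤ) * (((q : ℤ) ^ n - 1) * ((q : ℤ) ^ (n - 1) + 1)) / ((q : ℤ) - 1))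
    (hC₁ : (C₁ : ℤ) = ((q : ℤ) ^ n + 1) * ((q : ℤ) ^ (n - 1) - 1) / ((q : ℤ) - 1))
    (hC₂ : (C₂ : ℤ) = 1 + (q : ℤ) * ((q : ℤ) ^ (2 * n - 2) - 1) / ((q : ℤ) - 1))
    (hC₃ : (C₃ : ℤ) = ((q : ℤ) ^ n - 1) * ((q : ℤ) ^ (n - 1) + 1) / ((q : ℤ) - 1))
    (hC₄ : (C₄ : ℤ) = 1 + (q : ℤ) + (q : ℤ) ^ 2 * (((q : ℤ) ^ (n - 1) - 1) * ((q : ℤ) ^ (n - 2) + 1)) / ((q : ℤ) - 1))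
    (hhyp : ∀ W : Submodule F (Fin (2 * n + 2) → F), Module.finrank F W = 2 * n + 1 →
      {P | P ∈ K ∧ P ≤ W}.ncard = H₁ ∨ {P | P ∈ K ∧ P ≤ W}.ncard = H₂)
    (hcod2 : ∀ W : Submodule F (Fin (2 * n + 2) → F), Module.finrank F W = 2 * n →
      {P | P ∈ K ∧ P ≤ W}.ncard = C₁ ∨ {P | P ∈ K ∧ P ≤ W}.ncard = C₂ ∨
      {P | P ∈ K ∧ P ≤ W}.ncard = C₃ ∨ {P | P ∈ K ∧ P ≤ W}.ncard = C₄)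
    :
    (∀ P ∈ K, {W : Submodule F (Fin (2 * n + 2) → F) | Module.finrank F W = 2 * n + 1 ∧ P ≤ W ∧ {P | P ∈ K ∧ P ≤ W}.ncard = H₂}.ncard = H₂) ∧
    (∀ P : Submodule F (Fin (2 * n + 2) → F), Module.finrank F P = 1 → P ∉ K →
      {W : Submodule F (Fin (2 * n + 2) → F) | Module.finrank F W = 2 * n + 1 ∧ P ≤ W ∧ {P | P ∈ K ∧ P ≤ W}.ncard = H₂}.ncard = H₁) := by
  classical
  subst hF
  have hq1 : 1 ≤ Fintype.card F := Fintype.card_pos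
  have hq0 : 0 < Fintype.card F := Fintype.card_pos
  have hpow1 : ∀ m : ℕ, 1 ≤ Fintype.card F ^ m := fun m => Nat.one_le_pow _ _ hq0
  have hsqle : ∀ a : ℕ, a ≤ a * a := by
    intro a
    rcases Nat.eq_zero_or_pos a with h | h
    · simp [h]
    · exact Nat.le_mul_of_pos_left a h
  haveI : Finite (Submodule F (Fin (2 * n + 2) → F)) :=
    Finite.of_injective _ (SetLike.coe_injective (A := Submodule F (Fin (2 * n + 2) → F)))
  have hdim : Module.finrank F (Fin (2 * n + 2) → F) = 2 * n + 2 := Module.finrank_fin_fun F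
  set KF : Finset (Submodule F (Fin (2 * n + 2) → F)) := (Set.toFinite K).toFinset with hKFdef
  have hKFmem : ∀ P, P ∈ KF ↔ P ∈ K := fun P => Set.Finite.mem_toFinset _
  set 𝒲 : Finset (Submodule F (Fin (2 * n + 2) → F)) :=
    Finset.univ.filter (fun W => Module.finrank F W = 2 * n + 1) with h𝒲def
  have h𝒲mem : ∀ W, W ∈ 𝒲 ↔ Module.finrank F W = 2 * n + 1 := fun W => by
    simp [h𝒲def]
  set nw : Submodule F (Fin (2 * n + 2) → F) → ℕ :=
    fun W => (KF.filter (fun P => P ≤ W)).card with hnwdef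
  have hnW : ∀ W, {P | P ∈ K ∧ P ≤ W}.ncard = nw W := by
    intro W
    have h : {P | P ∈ K ∧ P ≤ W} = ↑(KF.filter (fun P => P ≤ W)) := by
      ext P
      simp [hKFmem, Set.mem_setOf_eq]
    rw [h, Set.ncard_coe_finset]
  -- counting hyperplanes above a subspace
  have hcount : ∀ (U : Submodule F (Fin (2 * n + 2) → F)) (r : ℕ),
      Module.finrank F U = r → r < 2 * n + 2 →
      (𝒲.filter (fun W => U ≤ W)).card * (Fintype.card F - 1)
        = Fintype.card F ^ (2 * n + 2 - r) - 1 := by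
    intro U r hU hr
    have h := aux_count_hyperplanes_above (2 * n + 2) r hdim U hU hr
    have hset : {W : Submodule F (Fin (2 * n + 2) → F) | Module.finrank F W + 1 = 2 * n + 2 ∧ U ≤ W}
        = ↑(𝒲.filter (fun W => U ≤ W)) := by
      ext W
      simp only [Set.mem_setOf_eq, Finset.coe_filter, h𝒲mem, Finset.mem_filter]
      constructor
      · rintro ⟨h1, h2⟩
        exact ⟨by omega, h2⟩
      · rintro ⟨h1, h2⟩
        exact ⟨by omega, h2⟩
    rw [hset, Set.ncard_coe_finset] at h
    exact h
  have hN : 𝒲.card * (Fintype.card F - 1) = Fintype.card F ^ (2 * n + 2) - 1 := by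
    have h := hcount ⊥ 0 (finrank_bot F _) (by omega)
    rwa [Finset.filter_true_of_mem (fun W _ => bot_le), Nat.sub_zero] at h
  have hline : ∀ P : Submodule F (Fin (2 * n + 2) → F), Module.finrank F P = 1 →
      (𝒲.filter (fun W => P ≤ W)).card * (Fintype.card F - 1)
        = Fintype.card F ^ (2 * n + 1) - 1 := by
    intro P hP
    have h := hcount P 1 hP (by omega)
    rwa [show 2 * n + 2 - 1 = 2 * n + 1 by omega] at h
  have hpair : ∀ P Q : Submodule F (Fin (2 * n + 2) → F), Module.finrank F P = 1 →
      Module.finrank F Q = 1 → P ≠ Q →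
      (𝒲.filter (fun W => P ≤ W ∧ Q ≤ W)).card * (Fintype.card F - 1)
        = Fintype.card F ^ (2 * n) - 1 := by
    intro P Q hP hQ hne
    have hint : P ⊓ Q = ⊥ := by
      have hle : Module.finrank F (P ⊓ Q : Submodule F (Fin (2 * n + 2) → F)) ≤ 1 := by
        rw [← hP]
        exact Submodule.finrank_mono inf_le_left
      rcases Nat.lt_or_ge (Module.finrank F (P ⊓ Q : Submodule F (Fin (2 * n + 2) → F))) 1
        with h | h
      · exact Submodule.finrank_eq_zero.mp (by omega)
      · exfalso
        have heq : P ⊓ Q = P := eq_of_le_of_finrank_eq inf_le_left (by omega)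
        have hPQ : P ≤ Q := heq ▸ inf_le_right
        exact hne (eq_of_le_of_finrank_eq hPQ (by omega))
    have hsup : Module.finrank F (P ⊔ Q : Submodule F (Fin (2 * n + 2) → F)) = 2 := by
      have h := Submodule.finrank_sup_add_finrank_inf_eq P Q
      rw [hint, finrank_bot, hP, hQ] at h
      omega
    have h := hcount (P ⊔ Q) 2 hsup (by omega)
    have hfe : 𝒲.filter (fun W => P ⊔ Q ≤ W) = 𝒲.filter (fun W => P ≤ W ∧ Q ≤ W) := by
      ext W
      simp only [Finset.mem_filter, sup_le_iff]
    rw [hfe, show 2 * n + 2 - 2 = 2 * n by omega] at h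
    exact h
  -- swap sums
  have hswap : ∀ 𝒜 : Finset (Submodule F (Fin (2 * n + 2) → F)),
      ∑ W ∈ 𝒜, nw W = ∑ P ∈ KF, (𝒜.filter (fun W => P ≤ W)).card := by
    intro 𝒜
    simp only [hnwdef, Finset.card_filter]
    exact Finset.sum_comm
  -- splitting sums by intersection size
  have hsplit : ∀ 𝒜 : Finset (Submodule F (Fin (2 * n + 2) → F)), 𝒜 ⊆ 𝒲 → ∀ f : ℕ → ℕ,
      ∑ W ∈ 𝒜, f (nw W)
        = (𝒜.filter (fun W => nw W = H₂)).card * f H₂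
          + (𝒜.filter (fun W => ¬ nw W = H₂)).card * f H₁ := by
    intro 𝒜 h𝒜 f
    rw [← Finset.sum_filter_add_sum_filter_not 𝒜 (fun W => nw W = H₂)]
    congr 1
    · rw [Finset.sum_congr rfl (fun W hW => by rw [(Finset.mem_filter.mp hW).2]),
        Finset.sum_const, smul_eq_mul]
    · rw [Finset.sum_congr rfl (fun W hW => ?_), Finset.sum_const, smul_eq_mul]
      have h1 := Finset.mem_filter.mp hW
      have h2 := hhyp W ((h𝒲mem W).mp (h𝒜 h1.1))
      rw [hnW W] at h2
      rcases h2 with h | h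
      · rw [h]
      · exact absurd h h1.2
  -- master counts (ℕ)
  have hAnat : (∑ W ∈ 𝒲, nw W) * (Fintype.card F - 1)
      = KF.card * (Fintype.card F ^ (2 * n + 1) - 1) := by
    rw [hswap 𝒲, Finset.sum_mul,
      Finset.sum_congr rfl (fun P hP => hline P (hK P ((hKFmem P).mp hP))),
      Finset.sum_const, smul_eq_mul]
  have hpairswap : ∑ W ∈ 𝒲, (nw W * nw W - nw W)
      = ∑ pq ∈ KF.offDiag, (𝒲.filter (fun W => pq.1 ≤ W ∧ pq.2 ≤ W)).card := by
    have h1 : ∀ W : Submodule F (Fin (2 * n + 2) → F), (KF.filter (fun P => P ≤ W)).offDiag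
        = KF.offDiag.filter (fun pq => pq.1 ≤ W ∧ pq.2 ≤ W) := by
      intro W
      ext pq
      simp only [Finset.mem_offDiag, Finset.mem_filter]
      tauto
    have h2 : ∀ W : Submodule F (Fin (2 * n + 2) → F), nw W * nw W - nw W
        = (KF.offDiag.filter (fun pq => pq.1 ≤ W ∧ pq.2 ≤ W)).card := by
      intro W
      rw [← h1 W, Finset.offDiag_card]
    rw [Finset.sum_congr rfl (fun W _ => h2 W)]
    simp only [Finset.card_filter]
    exact Finset.sum_comm
  have hBnat : (∑ W ∈ 𝒲, (nw W * nw W - nw W)) * (Fintype.card F - 1)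
      = (KF.card * KF.card - KF.card) * (Fintype.card F ^ (2 * n) - 1) := by
    rw [hpairswap, Finset.sum_mul]
    have hterm : ∀ pq ∈ KF.offDiag,
        (𝒲.filter (fun W => pq.1 ≤ W ∧ pq.2 ≤ W)).card * (Fintype.card F - 1)
          = Fintype.card F ^ (2 * n) - 1 := by
      intro pq hpq
      rw [Finset.mem_offDiag] at hpq
      exact hpair pq.1 pq.2 (hK _ ((hKFmem _).mp hpq.1)) (hK _ ((hKFmem _).mp hpq.2.1))
        hpq.2.2
    rw [Finset.sum_congr rfl hterm, Finset.sum_const, smul_eq_mul, Finset.offDiag_card]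
  have hsplitA : ∑ W ∈ 𝒲, nw W
      = (𝒲.filter (fun W => nw W = H₂)).card * H₂
        + (𝒲.filter (fun W => ¬ nw W = H₂)).card * H₁ :=
    hsplit 𝒲 (Finset.Subset.refl _) (fun a => a)
  have hsplitB : ∑ W ∈ 𝒲, (nw W * nw W - nw W)
      = (𝒲.filter (fun W => nw W = H₂)).card * (H₂ * H₂ - H₂)
        + (𝒲.filter (fun W => ¬ nw W = H₂)).card * (H₁ * H₁ - H₁) :=
    hsplit 𝒲 (Finset.Subset.refl _) (fun a => a * a - a)
  have hTT := Finset.card_filter_add_card_filter_not (s := 𝒲)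
    (p := fun W => nw W = H₂)
  -- ℤ versions
  have hq3 : (3:ℤ) ≤ (Fintype.card F : ℤ) := by exact_mod_cast hq
  have hc0 : ((Fintype.card F : ℤ) - 1) ≠ 0 := by omega
  have hx2 : ((Fintype.card F : ℤ))^2 ≤ ((Fintype.card F : ℤ))^n :=
    pow_le_pow_right₀ (by omega) hn
  have hdvd1 : ((Fintype.card F : ℤ) - 1) ∣ ((Fintype.card F : ℤ)^(2*n) - 1) := by
    simpa using sub_dvd_pow_sub_pow ((Fintype.card F : ℤ)) 1 (2*n)
  have hv1z : ((Fintype.card F : ℤ) - 1) * (H₁:ℤ)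
      = (Fintype.card F : ℤ)^n * (Fintype.card F : ℤ)^n - 1 := by
    rw [hH₁, Int.mul_ediv_cancel' hdvd1]
    ring
  have hdvd2 : ((Fintype.card F : ℤ) - 1)
      ∣ (Fintype.card F : ℤ) * (((Fintype.card F : ℤ)^n - 1) * ((Fintype.card F : ℤ)^(n-1) + 1)) := by
    have h := sub_dvd_pow_sub_pow ((Fintype.card F : ℤ)) 1 n
    simp only [one_pow] at h
    exact Dvd.dvd.mul_left (h.mul_right _) _
  have hpn1 : (Fintype.card F : ℤ) * (Fintype.card F : ℤ)^(n-1) = (Fintype.card F : ℤ)^n := by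
    rw [← pow_succ']
    congr 1
    omega
  have hv2z : ((Fintype.card F : ℤ) - 1) * (H₂:ℤ)
      = (Fintype.card F : ℤ)^n * (Fintype.card F : ℤ)^n - 1
        + ((Fintype.card F : ℤ) - 1) * (Fintype.card F : ℤ)^n := by
    rw [hH₂, mul_add, mul_one, Int.mul_ediv_cancel' hdvd2]
    linear_combination ((Fintype.card F : ℤ)^n - 1) * hpn1
  have f0 : ((Fintype.card F : ℤ) - 1) * ((𝒲.card : ℕ) : ℤ)
      = (Fintype.card F : ℤ) * (Fintype.card F : ℤ) * (Fintype.card F : ℤ)^n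
        * (Fintype.card F : ℤ)^n - 1 := by
    have h := congrArg (Nat.cast : ℕ → ℤ) hN
    simp only [Nat.cast_mul, Nat.cast_sub hq1, Nat.cast_sub (hpow1 (2*n+2)),
      Nat.cast_pow, Nat.cast_one] at h
    linear_combination h
  have f1 : ((Fintype.card F : ℤ) - 1) * ((∑ W ∈ 𝒲, nw W : ℕ) : ℤ)
      = ((KF.card : ℕ) : ℤ) * ((Fintype.card F : ℤ) * (Fintype.card F : ℤ)^n
        * (Fintype.card F : ℤ)^n - 1) := by
    have h := congrArg (Nat.cast : ℕ → ℤ) hAnat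
    simp only [Nat.cast_mul, Nat.cast_sub hq1, Nat.cast_sub (hpow1 (2*n+1)),
      Nat.cast_pow, Nat.cast_one] at h
    linear_combination h
  have f2 : ((∑ W ∈ 𝒲, nw W : ℕ) : ℤ)
      = (((𝒲.filter (fun W => nw W = H₂)).card : ℕ) : ℤ) * (H₂:ℤ)
        + (((𝒲.filter (fun W => ¬ nw W = H₂)).card : ℕ) : ℤ) * (H₁:ℤ) := by
    exact_mod_cast hsplitA
  have f3 : (((𝒲.filter (fun W => nw W = H₂)).card : ℕ) : ℤ)
      + (((𝒲.filter (fun W => ¬ nw W = H₂)).card : ℕ) : ℤ) = ((𝒲.card : ℕ) : ℤ) := by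
    exact_mod_cast hTT
  have f4 : ((Fintype.card F : ℤ) - 1) * ((∑ W ∈ 𝒲, (nw W * nw W - nw W) : ℕ) : ℤ)
      = (((KF.card : ℕ):ℤ) * ((KF.card : ℕ):ℤ) - ((KF.card : ℕ):ℤ))
        * ((Fintype.card F : ℤ)^n * (Fintype.card F : ℤ)^n - 1) := by
    have h := congrArg (Nat.cast : ℕ → ℤ) hBnat
    simp only [Nat.cast_mul, Nat.cast_sub hq1, Nat.cast_sub (hpow1 (2*n)),
      Nat.cast_sub (hsqle KF.card), Nat.cast_pow, Nat.cast_one] at h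
    linear_combination h
  have f5 : ((∑ W ∈ 𝒲, (nw W * nw W - nw W) : ℕ) : ℤ)
      = (((𝒲.filter (fun W => nw W = H₂)).card : ℕ) : ℤ) * ((H₂:ℤ)*(H₂:ℤ) - (H₂:ℤ))
        + (((𝒲.filter (fun W => ¬ nw W = H₂)).card : ℕ) : ℤ) * ((H₁:ℤ)*(H₁:ℤ) - (H₁:ℤ)) := by
    have h := congrArg (Nat.cast : ℕ → ℤ) hsplitB
    simp only [Nat.cast_add, Nat.cast_mul, Nat.cast_sub (hsqle H₂),
      Nat.cast_sub (hsqle H₁)] at h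
    exact h
  have hdvdQ1 : ((Fintype.card F : ℤ) - 1)
      ∣ ((Fintype.card F : ℤ) * (Fintype.card F : ℤ)^n * (Fintype.card F : ℤ)^n - 1) := by
    obtain ⟨t, ht⟩ := sub_dvd_pow_sub_pow ((Fintype.card F : ℤ)) 1 (2*n+1)
    exact ⟨t, by linear_combination ht⟩
  have hkval := aux_arith (Fintype.card F : ℤ) ((Fintype.card F : ℤ)^n) (H₁:ℤ) (H₂:ℤ)
    ((𝒲.card : ℕ) : ℤ) (((𝒲.filter (fun W => nw W = H₂)).card : ℕ) : ℤ)
    (((𝒲.filter (fun W => ¬ nw W = H₂)).card : ℕ) : ℤ)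
    ((∑ W ∈ 𝒲, nw W : ℕ) : ℤ) ((∑ W ∈ 𝒲, (nw W * nw W - nw W) : ℕ) : ℤ)
    ((KF.card : ℕ) : ℤ) hq3 hx2 hv1z hv2z f0 f1 f2 f3 f4 f5 hdvdQ1
  -- per-point tangent counts
  have key : ∀ P : Submodule F (Fin (2 * n + 2) → F), Module.finrank F P = 1 →
      ((((𝒲.filter (fun W => P ≤ W)).filter (fun W => nw W = H₂)).card : ℕ) : ℤ)
        = (if P ∈ K then 1 else 0) * (Fintype.card F : ℤ)^n + (H₁:ℤ) := by
    intro P hP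
    have eP0 : (𝒲.filter (fun W => P ≤ W)).card * (Fintype.card F - 1)
        = Fintype.card F ^ (2*n+1) - 1 := hline P hP
    have hsplitP : ∑ W ∈ 𝒲.filter (fun W => P ≤ W), nw W
        = ((𝒲.filter (fun W => P ≤ W)).filter (fun W => nw W = H₂)).card * H₂
          + ((𝒲.filter (fun W => P ≤ W)).filter (fun W => ¬ nw W = H₂)).card * H₁ :=
      hsplit _ (Finset.filter_subset _ _) (fun a => a)
    have hTTP := Finset.card_filter_add_card_filter_not
      (s := 𝒲.filter (fun W => P ≤ W)) (p := fun W => nw W = H₂)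
    have hAP := hswap (𝒲.filter (fun W => P ≤ W))
    have hQval : ∀ Q ∈ KF, Q ≠ P →
        ((𝒲.filter (fun W => P ≤ W)).filter (fun W => Q ≤ W)).card * (Fintype.card F - 1)
          = Fintype.card F ^ (2*n) - 1 := by
      intro Q hQ hne
      rw [Finset.filter_filter]
      exact hpair P Q hP (hK Q ((hKFmem Q).mp hQ)) hne.symm
    have w0 : ((Fintype.card F : ℤ) - 1) * (((𝒲.filter (fun W => P ≤ W)).card : ℕ) : ℤ)
        = (Fintype.card F : ℤ) * (Fintype.card F : ℤ)^n * (Fintype.card F : ℤ)^n - 1 := by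
      have h := congrArg (Nat.cast : ℕ → ℤ) eP0
      simp only [Nat.cast_mul, Nat.cast_sub hq1, Nat.cast_sub (hpow1 (2*n+1)),
        Nat.cast_pow, Nat.cast_one] at h
      linear_combination h
    have w1 : ((∑ W ∈ 𝒲.filter (fun W => P ≤ W), nw W : ℕ) : ℤ)
        = ((((𝒲.filter (fun W => P ≤ W)).filter (fun W => nw W = H₂)).card : ℕ) : ℤ) * (H₂:ℤ)
          + ((((𝒲.filter (fun W => P ≤ W)).filter (fun W => ¬ nw W = H₂)).card : ℕ) : ℤ)
            * (H₁:ℤ) := by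
      exact_mod_cast hsplitP
    have w3 : ((((𝒲.filter (fun W => P ≤ W)).filter (fun W => nw W = H₂)).card : ℕ) : ℤ)
        + ((((𝒲.filter (fun W => P ≤ W)).filter (fun W => ¬ nw W = H₂)).card : ℕ) : ℤ)
          = (((𝒲.filter (fun W => P ≤ W)).card : ℕ) : ℤ) := by
      exact_mod_cast hTTP
    by_cases hPK : P ∈ K
    · have hPKF : P ∈ KF := (hKFmem P).mpr hPK
      have hk1 : 1 ≤ KF.card := Finset.card_pos.mpr ⟨P, hPKF⟩
      have hself : (𝒲.filter (fun W => P ≤ W)).filter (fun W => P ≤ W)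
          = 𝒲.filter (fun W => P ≤ W) :=
        Finset.filter_true_of_mem (fun W hW => (Finset.mem_filter.mp hW).2)
      have hsum : (∑ W ∈ 𝒲.filter (fun W => P ≤ W), nw W) * (Fintype.card F - 1)
          = (Fintype.card F ^ (2*n+1) - 1)
            + (KF.card - 1) * (Fintype.card F ^ (2*n) - 1) := by
        rw [hAP, Finset.sum_mul, ← Finset.add_sum_erase _ _ hPKF]
        congr 1
        · rw [hself]
          exact eP0
        · rw [Finset.sum_congr rfl (fun Q hQ => hQval Q (Finset.mem_of_mem_erase hQ)
            (Finset.ne_of_mem_erase hQ)), Finset.sum_const, smul_eq_mul,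
            Finset.card_erase_of_mem hPKF]
      have w2 : ((Fintype.card F : ℤ) - 1) * ((∑ W ∈ 𝒲.filter (fun W => P ≤ W), nw W : ℕ) : ℤ)
          = 1 * ((Fintype.card F : ℤ) * (Fintype.card F : ℤ)^n * (Fintype.card F : ℤ)^n - 1)
            + (((KF.card : ℕ):ℤ) - 1) * ((Fintype.card F : ℤ)^n * (Fintype.card F : ℤ)^n - 1) := by
        have h := congrArg (Nat.cast : ℕ → ℤ) hsum
        simp only [Nat.cast_mul, Nat.cast_add, Nat.cast_sub hq1, Nat.cast_sub (hpow1 (2*n+1)),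
          Nat.cast_sub (hpow1 (2*n)), Nat.cast_sub hk1, Nat.cast_pow, Nat.cast_one] at h
        linear_combination h
      have h := aux_arith2 (Fintype.card F : ℤ) ((Fintype.card F : ℤ)^n) (H₁:ℤ) (H₂:ℤ)
        (((𝒲.filter (fun W => P ≤ W)).card : ℕ) : ℤ)
        ((((𝒲.filter (fun W => P ≤ W)).filter (fun W => nw W = H₂)).card : ℕ) : ℤ)
        ((((𝒲.filter (fun W => P ≤ W)).filter (fun W => ¬ nw W = H₂)).card : ℕ) : ℤ)
        ((∑ W ∈ 𝒲.filter (fun W => P ≤ W), nw W : ℕ) : ℤ)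
        ((KF.card : ℕ) : ℤ) 1 hq3 hx2 hv1z hv2z hkval w0 w1 w3 w2
      rw [if_pos hPK]
      exact h
    · have hne : ∀ Q ∈ KF, Q ≠ P := by
        intro Q hQ h
        exact hPK (h ▸ (hKFmem Q).mp hQ)
      have hsum : (∑ W ∈ 𝒲.filter (fun W => P ≤ W), nw W) * (Fintype.card F - 1)
          = KF.card * (Fintype.card F ^ (2*n) - 1) := by
        rw [hAP, Finset.sum_mul,
          Finset.sum_congr rfl (fun Q hQ => hQval Q hQ (hne Q hQ)),
          Finset.sum_const, smul_eq_mul]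
      have w2 : ((Fintype.card F : ℤ) - 1) * ((∑ W ∈ 𝒲.filter (fun W => P ≤ W), nw W : ℕ) : ℤ)
          = 0 * ((Fintype.card F : ℤ) * (Fintype.card F : ℤ)^n * (Fintype.card F : ℤ)^n - 1)
            + (((KF.card : ℕ):ℤ) - 0) * ((Fintype.card F : ℤ)^n * (Fintype.card F : ℤ)^n - 1) := by
        have h := congrArg (Nat.cast : ℕ → ℤ) hsum
        simp only [Nat.cast_mul, Nat.cast_sub hq1, Nat.cast_sub (hpow1 (2*n)),
          Nat.cast_pow, Nat.cast_one] at h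
        linear_combination h
      have h := aux_arith2 (Fintype.card F : ℤ) ((Fintype.card F : ℤ)^n) (H₁:ℤ) (H₂:ℤ)
        (((𝒲.filter (fun W => P ≤ W)).card : ℕ) : ℤ)
        ((((𝒲.filter (fun W => P ≤ W)).filter (fun W => nw W = H₂)).card : ℕ) : ℤ)
        ((((𝒲.filter (fun W => P ≤ W)).filter (fun W => ¬ nw W = H₂)).card : ℕ) : ℤ)
        ((∑ W ∈ 𝒲.filter (fun W => P ≤ W), nw W : ℕ) : ℤ)
        ((KF.card : ℕ) : ℤ) 0 hq3 hx2 hv1z hv2z hkval w0 w1 w3 w2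
      rw [if_neg hPK]
      exact h
  have hH21 : (H₂:ℤ) = (Fintype.card F : ℤ)^n + (H₁:ℤ) := by
    apply mul_left_cancel₀ hc0
    linear_combination hv2z - hv1z
  have hgoal : ∀ P : Submodule F (Fin (2 * n + 2) → F),
      {W : Submodule F (Fin (2 * n + 2) → F) | Module.finrank F W = 2 * n + 1 ∧ P ≤ W
        ∧ {P' | P' ∈ K ∧ P' ≤ W}.ncard = H₂}
      = ↑((𝒲.filter (fun W => P ≤ W)).filter (fun W => nw W = H₂)) := by
    intro P
    ext W
    simp only [Set.mem_setOf_eq, Finset.coe_filter, Finset.mem_filter, h𝒲mem, hnW]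
    tauto
  constructor
  · intro P hPK
    rw [hgoal P, Set.ncard_coe_finset]
    have h := key P (hK P hPK)
    rw [if_pos hPK] at h
    have h2 : ((((𝒲.filter (fun W => P ≤ W)).filter (fun W => nw W = H₂)).card : ℕ) : ℤ)
        = (H₂ : ℤ) := by
      rw [h, hH21]
      ring
    exact_mod_cast h2
  · intro P hP1 hPK
    rw [hgoal P, Set.ncard_coe_finset]
    have h := key P hP1
    rw [if_neg hPK] at h
    have h2 : ((((𝒲.filter (fun W => P ≤ W)).filter (fun W => nw W = H₂)).card : ℕ) : ℤ)
        = (H₁ : ℤ) := by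
      rw [h]
      ring
    exact_mod_cast h2
end

section
/- Under the elliptic hypotheses, through a codimension-2 subspace meeting K in C₁ points there pass exactly 0 tangent hyperplanes, through one meeting K in C₂ points exactly 1, through one meeting K in C₃ points exactly 2, and through one meeting K in C₄ points exactly q+1 tangent hyperplanes. -/
open Module


lemma aux_lines (F V : Type*) [Field F] [Fintype F] [AddCommGroup V] [Module F V]
    [Finite V] (h2 : finrank F V = 2) :
    {L : Submodule F V | finrank F L = 1}.ncard = Fintype.card F + 1 := by
  classical
  cases nonempty_fintype V
  haveI : FiniteDimensional F V := Module.finite_iff_finite.mpr inferInstance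
  set q := Fintype.card F with hq
  have hq1 : 1 < q := Fintype.one_lt_card
  have hnz : (Finset.univ.filter (fun v : V => v ≠ 0)).card = q^2 - 1 := by
    rw [Finset.filter_ne']
    · rw [Finset.card_erase_of_mem (Finset.mem_univ _), Finset.card_univ]
      congr 1
      rw [← h2]; exact card_eq_pow_finrank
  haveI : Fintype (Submodule F V) := Fintype.ofFinite _
  set t : Finset (Submodule F V) := Finset.univ.filter (fun L => finrank F L = 1) with ht
  have key : (Finset.univ.filter (fun v : V => v ≠ 0)).card = t.card * (q - 1) := by
    rw [Finset.card_eq_sum_card_fiberwise (f := fun v => Submodule.span F {v})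
      (t := t) ?_]
    · rw [Finset.sum_congr rfl (g := fun _ => q - 1) ?_, Finset.sum_const, smul_eq_mul]
      intro L hL
      rw [ht, Finset.mem_filter] at hL
      have hfib : (Finset.univ.filter (fun v : V => v ≠ 0)).filter
          (fun v => Submodule.span F {v} = L) =
          (Finset.univ.filter (fun v : V => v ∈ L ∧ v ≠ 0)) := by
        ext v
        simp only [Finset.mem_filter, Finset.mem_univ, true_and]
        constructor
        · rintro ⟨hv, rfl⟩
          exact ⟨Submodule.mem_span_singleton_self v, hv⟩
        · rintro ⟨hvL, hv⟩
          refine ⟨hv, ?_⟩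
          apply Submodule.eq_of_le_of_finrank_le
          · rwa [Submodule.span_le, Set.singleton_subset_iff]
          · rw [hL.2, finrank_span_singleton hv]
      rw [hfib]
      have : (Finset.univ.filter (fun v : V => v ∈ L ∧ v ≠ 0)).card
          = Fintype.card {x : L // x ≠ 0} := by
        rw [Fintype.card_subtype]
        apply Finset.card_bij (fun v hv => (⟨v, (Finset.mem_filter.mp hv).2.1⟩ : L))
        · intro a ha
          simp only [Finset.mem_filter, Finset.mem_univ, true_and] at ha ⊢
          exact fun h => ha.2 (congrArg Subtype.val h)
        · intro a ha b hb hab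
          exact congrArg Subtype.val hab
        · intro b hb
          simp only [Finset.mem_filter, Finset.mem_univ, true_and] at hb
          refine ⟨(b : V), Finset.mem_filter.mpr ⟨Finset.mem_univ _, b.2, ?_⟩, rfl⟩
          exact fun h => hb (Subtype.ext h)
      rw [this, Fintype.card_subtype_compl]
      have : Fintype.card L = q ^ 1 := by
        rw [← hL.2]; exact card_eq_pow_finrank
      rw [this]
      simp
    · intro v hv
      rw [Finset.mem_coe, Finset.mem_filter] at hv
      rw [Finset.mem_coe, ht, Finset.mem_filter]
      exact ⟨Finset.mem_univ _, finrank_span_singleton hv.2⟩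
  have hcard_t : t.card = q + 1 := by
    have h1 : q ^ 2 - 1 = (q+1) * (q-1) := by
      have hq0 : 1 ≤ q := by omega
      have hq2 : 1 ≤ q^2 := Nat.one_le_pow _ _ (by omega)
      zify [hq0, hq2]; ring
    rw [hnz, h1] at key
    have := Nat.eq_of_mul_eq_mul_right (by omega : 0 < q - 1) key.symm
    omega
  have : {L : Submodule F V | finrank F L = 1}.ncard = t.card := by
    rw [Set.ncard_eq_toFinset_card']
    congr 1
    ext L
    simp [ht]
  rw [this, hcard_t]

lemma aux_rank_map (F V : Type*) [Field F] [AddCommGroup V] [Module F V]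
    [FiniteDimensional F V] (S W : Submodule F V) (hSW : S ≤ W) :
    finrank F (W.map S.mkQ) + finrank F S = finrank F W := by
  let f := S.mkQ.comp W.subtype
  have hr : LinearMap.range f = W.map S.mkQ := by
    rw [LinearMap.range_comp, Submodule.range_subtype]
  have hk : LinearMap.ker f = S.comap W.subtype := by
    rw [LinearMap.ker_comp, Submodule.ker_mkQ]
  have := LinearMap.finrank_range_add_finrank_ker f
  rw [hr, hk] at this
  rwa [(Submodule.comapSubtypeEquivOfLe hSW).finrank_eq] at this

lemma aux_hyp_count (F V : Type*) [Field F] [Fintype F] [AddCommGroup V] [Module F V]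
    [Finite V] (S : Submodule F V) (h : finrank F V = finrank F S + 2) :
    {W : Submodule F V | finrank F W = finrank F S + 1 ∧ S ≤ W}.ncard
      = Fintype.card F + 1 := by
  classical
  haveI : FiniteDimensional F V := Module.finite_iff_finite.mpr inferInstance
  haveI : Finite (V ⧸ S) := Finite.of_surjective _ (Submodule.mkQ_surjective S)
  have hQ2 : finrank F (V ⧸ S) = 2 := by
    have := Submodule.finrank_quotient_add_finrank S
    omega
  rw [← aux_lines F (V ⧸ S) hQ2]
  set r := finrank F S
  have hbij : Set.BijOn (fun W : Submodule F V => W.map S.mkQ)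
      {W : Submodule F V | finrank F W = r + 1 ∧ S ≤ W}
      {L : Submodule F (V ⧸ S) | finrank F L = 1} := by
    refine ⟨?_, ?_, ?_⟩
    · rintro W ⟨hW, hSW⟩
      have := aux_rank_map F V S W hSW
      simp only [Set.mem_setOf_eq]
      omega
    · rintro W₁ ⟨h₁, hS₁⟩ W₂ ⟨h₂, hS₂⟩ hmap
      have e₁ : Submodule.comap S.mkQ (W₁.map S.mkQ) = W₁ := by
        rw [Submodule.comap_map_mkQ, sup_eq_right.mpr hS₁]
      have e₂ : Submodule.comap S.mkQ (W₂.map S.mkQ) = W₂ := by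
        rw [Submodule.comap_map_mkQ, sup_eq_right.mpr hS₂]
      rw [← e₁, ← e₂]
      exact congrArg _ hmap
    · rintro L hL
      refine ⟨Submodule.comap S.mkQ L, ⟨?_, ?_⟩, ?_⟩
      · have hSle : S ≤ Submodule.comap S.mkQ L := by
          intro x hx
          simp only [Submodule.mem_comap, Submodule.mkQ_apply]
          rw [(Submodule.Quotient.mk_eq_zero S).mpr hx]
          exact L.zero_mem
        have := aux_rank_map F V S _ hSle
        rw [Submodule.map_comap_eq_of_surjective (Submodule.mkQ_surjective S)] at this
        rw [Set.mem_setOf_eq] at hL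
        omega
      · intro x hx
        simp only [Submodule.mem_comap, Submodule.mkQ_apply]
        rw [(Submodule.Quotient.mk_eq_zero S).mpr hx]
        exact L.zero_mem
      · exact Submodule.map_comap_eq_of_surjective (Submodule.mkQ_surjective S) L
  rw [← Nat.card_coe_set_eq, ← Nat.card_coe_set_eq]
  exact Nat.card_congr (hbij.equiv _)

lemma aux_unique (F V : Type*) [Field F] [AddCommGroup V] [Module F V]
    [FiniteDimensional F V] (S P : Submodule F V)
    (hP : finrank F P = 1) (hPS : ¬ P ≤ S) :
    {W : Submodule F V | finrank F W = finrank F S + 1 ∧ S ≤ W ∧ P ≤ W}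
      = {S ⊔ P} := by
  have hinf : finrank F (S ⊓ P : Submodule F V) = 0 := by
    by_contra h
    have hle : S ⊓ P ≤ P := inf_le_right
    have h1 : finrank F (S ⊓ P : Submodule F V) ≤ 1 := by
      rw [← hP]; exact Submodule.finrank_mono hle
    have : S ⊓ P = P := by
      apply Submodule.eq_of_le_of_finrank_le hle
      omega
    exact hPS (by rw [← this]; exact inf_le_left)
  have hsup : finrank F (S ⊔ P : Submodule F V) = finrank F S + 1 := by
    have := Submodule.finrank_sup_add_finrank_inf_eq S P
    omega
  ext W
  simp only [Set.mem_setOf_eq, Set.mem_singleton_iff]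
  constructor
  · rintro ⟨hW, hSW, hPW⟩
    have hle : S ⊔ P ≤ W := sup_le hSW hPW
    exact (Submodule.eq_of_le_of_finrank_le hle (by omega)).symm
  · rintro rfl
    exact ⟨hsup, le_sup_left, le_sup_right⟩

set_option maxHeartbeats 1000000 in
theorem stmt_13
    (q n : ℕ) (hq : 2 < q) (hn : 2 ≤ n)
    (F : Type*) [Field F] [Fintype F] (hF : Fintype.card F = q)
    (K : Set (Submodule F (Fin (2 * n + 2) → F)))
    (hK : ∀ P ∈ K, Module.finrank F P = 1)
    (H₁ H₂ C₁ C₂ C₃ C₄ : ℕ)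
    (hH₁ : (H₁ : ℤ) = ((q : ℤ) ^ (2 * n) - 1) / ((q : ℤ) - 1))
    (hH₂ : (H₂ : ℤ) = 1 + (q : ℤ) * (((q : ℤ) ^ n + 1) * ((q : ℤ) ^ (n - 1) - 1)) / ((q : ℤ) - 1))
    (hC₁ : (C₁ : ℤ) = ((q : ℤ) ^ n - 1) * ((q : ℤ) ^ (n - 1) + 1) / ((q : ℤ) - 1))
    (hC₂ : (C₂ : ℤ) = 1 + (q : ℤ) * ((q : ℤ) ^ (2 * n - 2) - 1) / ((q : ℤ) - 1))
    (hC₃ : (C₃ : ℤ) = ((q : ℤ) ^ n + 1) * ((q : ℤ) ^ (n - 1) - 1) / ((q : ℤ) - 1))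
    (hC₄ : (C₄ : ℤ) = 1 + (q : ℤ) + (q : ℤ) ^ 2 * (((q : ℤ) ^ (n - 1) + 1) * ((q : ℤ) ^ (n - 2) - 1)) / ((q : ℤ) - 1))
    (hhyp : ∀ W : Submodule F (Fin (2 * n + 2) → F), Module.finrank F W = 2 * n + 1 →
      {P | P ∈ K ∧ P ≤ W}.ncard = H₁ ∨ {P | P ∈ K ∧ P ≤ W}.ncard = H₂)
    (hcod2 : ∀ W : Submodule F (Fin (2 * n + 2) → F), Module.finrank F W = 2 * n →
      {P | P ∈ K ∧ P ≤ W}.ncard = C₁ ∨ {P | P ∈ K ∧ P ≤ W}.ncard = C₂ ∨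
      {P | P ∈ K ∧ P ≤ W}.ncard = C₃ ∨ {P | P ∈ K ∧ P ≤ W}.ncard = C₄)
    (hcard : (K.ncard : ℤ) = ((q : ℤ) ^ n - 1) * ((q : ℤ) ^ (n + 1) + 1) / ((q : ℤ) - 1))
    :
    ∀ S : Submodule F (Fin (2 * n + 2) → F), Module.finrank F S = 2 * n →
      ({P | P ∈ K ∧ P ≤ S}.ncard = C₁ → {W : Submodule F (Fin (2 * n + 2) → F) | Module.finrank F W = 2 * n + 1 ∧ S ≤ W ∧ {P | P ∈ K ∧ P ≤ W}.ncard = H₂}.ncard = 0) ∧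
      ({P | P ∈ K ∧ P ≤ S}.ncard = C₂ → {W : Submodule F (Fin (2 * n + 2) → F) | Module.finrank F W = 2 * n + 1 ∧ S ≤ W ∧ {P | P ∈ K ∧ P ≤ W}.ncard = H₂}.ncard = 1) ∧
      ({P | P ∈ K ∧ P ≤ S}.ncard = C₃ → {W : Submodule F (Fin (2 * n + 2) → F) | Module.finrank F W = 2 * n + 1 ∧ S ≤ W ∧ {P | P ∈ K ∧ P ≤ W}.ncard = H₂}.ncard = 2) ∧
      ({P | P ∈ K ∧ P ≤ S}.ncard = C₄ → {W : Submodule F (Fin (2 * n + 2) → F) | Module.finrank F W = 2 * n + 1 ∧ S ≤ W ∧ {P | P ∈ K ∧ P ≤ W}.ncard = H₂}.ncard = q + 1) := by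
  classical
  obtain ⟨m, hm⟩ : ∃ m, n = m + 2 := ⟨n - 2, by omega⟩
  have p0 : ((q:ℤ)) ^ n = (q:ℤ) ^ (m + 2) := by congr 1
  have p1 : ((q:ℤ)) ^ (n - 1) = (q:ℤ) ^ (m + 1) := by congr 1; omega
  have p2 : ((q:ℤ)) ^ (n - 2) = (q:ℤ) ^ m := by congr 1; omega
  have p3 : ((q:ℤ)) ^ (n + 1) = (q:ℤ) ^ (m + 3) := by congr 1; omega
  have p4 : ((q:ℤ)) ^ (2 * n) = (q:ℤ) ^ (2 * m + 4) := by congr 1; omega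
  have p5 : ((q:ℤ)) ^ (2 * n - 2) = (q:ℤ) ^ (2 * m + 2) := by congr 1; omega
  rw [p4] at hH₁
  rw [p0, p1] at hH₂
  rw [p0, p1] at hC₁
  rw [p5] at hC₂
  rw [p0, p1] at hC₃
  rw [p1, p2] at hC₄
  rw [p0, p3] at hcard
  intro S hS
  set V := Fin (2 * n + 2) → F with hV
  haveI : Finite (Submodule F V) :=
    Finite.of_injective (fun W => (W : Set V)) SetLike.coe_injective
  haveI : Fintype (Submodule F V) := Fintype.ofFinite _
  haveI : FiniteDimensional F V := by infer_instance
  have hVrank : finrank F V = 2 * n + 2 := by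
    show finrank F (Fin (2 * n + 2) → F) = 2 * n + 2
    simp
  -- the finsets
  set Kf : Finset (Submodule F V) := Set.toFinset K with hKf
  have hKfmem : ∀ P, P ∈ Kf ↔ P ∈ K := fun P => Set.mem_toFinset
  set Wf : Finset (Submodule F V) :=
    Finset.univ.filter (fun W => finrank F W = 2 * n + 1 ∧ S ≤ W) with hWf
  have hWfmem : ∀ W, W ∈ Wf ↔ (finrank F W = 2 * n + 1 ∧ S ≤ W) := by
    intro W; simp [hWf]
  have hWfcard : Wf.card = q + 1 := by
    have h := aux_hyp_count F V S (by rw [hVrank, hS])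
    rw [hS] at h
    rw [← hF, ← h]
    rw [Set.ncard_eq_toFinset_card']
    congr 1
    ext W
    simp [hWf]
  set Tf : Finset (Submodule F V) :=
    Wf.filter (fun W => {P | P ∈ K ∧ P ≤ W}.ncard = H₂) with hTf
  set t := Tf.card with htdef
  have htle : t ≤ q + 1 := by
    rw [htdef, ← hWfcard]; exact Finset.card_filter_le _ _
  -- target set ncard = t
  have htarget : {W : Submodule F V | finrank F W = 2 * n + 1 ∧ S ≤ W ∧
      {P | P ∈ K ∧ P ≤ W}.ncard = H₂}.ncard = t := by
    rw [Set.ncard_eq_toFinset_card']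
    congr 1
    ext W
    simp only [Set.mem_toFinset, Set.mem_setOf_eq, hTf, Finset.mem_filter, hWfmem]
    tauto
  set c := {P | P ∈ K ∧ P ≤ S}.ncard with hc
  have hcf : ∀ W : Submodule F V, {P | P ∈ K ∧ P ≤ W}.ncard
      = (Kf.filter (fun P => P ≤ W)).card := by
    intro W
    rw [Set.ncard_eq_toFinset_card']
    congr 1
    ext P
    simp [hKf]
  have hcKf : c ≤ Kf.card := by
    rw [hc, hcf S]; exact Finset.card_filter_le _ _
  -- the double counting
  have hdouble : ∑ W ∈ Wf, (Kf.filter (fun P => P ≤ W)).card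
      = ∑ P ∈ Kf, (Wf.filter (fun W => P ≤ W)).card := by
    simp_rw [Finset.card_filter]
    exact Finset.sum_comm
  -- RHS evaluation
  have hRHS : ∑ P ∈ Kf, (Wf.filter (fun W => P ≤ W)).card
      = c * (q + 1) + (Kf.card - c) := by
    rw [← Finset.sum_filter_add_sum_filter_not Kf (fun P => P ≤ S)]
    have h1 : ∀ P ∈ Kf.filter (fun P => P ≤ S),
        (Wf.filter (fun W => P ≤ W)).card = q + 1 := by
      intro P hP
      rw [Finset.mem_filter] at hP
      rw [Finset.filter_true_of_mem, hWfcard]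
      intro W hW
      exact le_trans hP.2 ((hWfmem W).mp hW).2
    have h2 : ∀ P ∈ Kf.filter (fun P => ¬ P ≤ S),
        (Wf.filter (fun W => P ≤ W)).card = 1 := by
      intro P hP
      rw [Finset.mem_filter] at hP
      have huniq := aux_unique F V S P (hK P ((hKfmem P).mp hP.1)) hP.2
      rw [hS] at huniq
      have : Wf.filter (fun W => P ≤ W) = {S ⊔ P} := by
        ext W
        rw [Finset.mem_filter, hWfmem, Finset.mem_singleton]
        have := Set.ext_iff.mp huniq W
        simp only [Set.mem_setOf_eq, Set.mem_singleton_iff] at this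
        tauto
      rw [this, Finset.card_singleton]
    rw [Finset.sum_congr rfl h1, Finset.sum_congr rfl h2]
    rw [Finset.sum_const, Finset.sum_const, smul_eq_mul, smul_eq_mul, mul_one]
    have hcfil : (Kf.filter (fun P => P ≤ S)).card = c := by
      rw [hc, hcf S]
    rw [hcfil, Finset.filter_not, Finset.card_sdiff_of_subset (Finset.filter_subset _ _), hcfil]
  -- LHS evaluation
  have hLHS : ∑ W ∈ Wf, (Kf.filter (fun P => P ≤ W)).card
      = t * H₂ + (q + 1 - t) * H₁ := by
    rw [← Finset.sum_filter_add_sum_filter_not Wf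
      (fun W => {P | P ∈ K ∧ P ≤ W}.ncard = H₂)]
    have h1 : ∀ W ∈ Wf.filter (fun W => {P | P ∈ K ∧ P ≤ W}.ncard = H₂),
        (Kf.filter (fun P => P ≤ W)).card = H₂ := by
      intro W hW
      rw [Finset.mem_filter] at hW
      rw [← hcf W]; exact hW.2
    have h2 : ∀ W ∈ Wf.filter (fun W => ¬ {P | P ∈ K ∧ P ≤ W}.ncard = H₂),
        (Kf.filter (fun P => P ≤ W)).card = H₁ := by
      intro W hW
      rw [Finset.mem_filter] at hW
      rw [← hcf W]
      rcases hhyp W ((hWfmem W).mp hW.1).1 with h | h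
      · exact h
      · exact absurd h hW.2
    rw [Finset.sum_congr rfl h1, Finset.sum_congr rfl h2,
      Finset.sum_const, Finset.sum_const, smul_eq_mul, smul_eq_mul]
    congr 2
    rw [Finset.filter_not, Finset.card_sdiff_of_subset (Finset.filter_subset _ _), hWfcard]
  -- master equation over ℕ
  have hmaster : t * H₂ + (q + 1 - t) * H₁ = c * (q + 1) + (Kf.card - c) := by
    rw [← hLHS, hdouble, hRHS]
  have hKcard : (Kf.card : ℤ) = (K.ncard : ℤ) := by
    have h : K.ncard = Kf.card := Set.ncard_eq_toFinset_card' K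
    rw [h]
  -- master equation over ℤ
  have hmasterZ : (t : ℤ) * H₂ + ((q : ℤ) + 1 - t) * H₁
      = (c : ℤ) * ((q : ℤ) + 1) + ((K.ncard : ℤ) - c) := by
    rw [← hKcard]
    have := congrArg (fun x : ℕ => (x : ℤ)) hmaster
    push_cast [htle, hcKf] at this
    linarith
  -- integer algebra
  set e : ℤ := (q : ℤ) with he
  have he3 : (3 : ℤ) ≤ e := by rw [he]; exact_mod_cast hq
  have hne : e - 1 ≠ 0 := by omega
  have hqne : e ≠ 0 := by omega
  have dv : ∀ k : ℕ, (e - 1) ∣ e ^ k - 1 := fun k => by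
    simpa using sub_dvd_pow_sub_pow e 1 k
  have E1 : (e - 1) * (H₁ : ℤ) = e ^ (2 * m + 4) - 1 := by
    rw [hH₁, Int.mul_ediv_cancel' (dv _)]
  have E2 : (e - 1) * (H₂ : ℤ)
      = (e - 1) + e * ((e ^ (m + 2) + 1) * (e ^ (m + 1) - 1)) := by
    rw [hH₂]
    linear_combination Int.mul_ediv_cancel'
      (((dv (m + 1)).mul_left (e ^ (m + 2) + 1)).mul_left e)
  have E3 : (e - 1) * (C₁ : ℤ) = (e ^ (m + 2) - 1) * (e ^ (m + 1) + 1) := by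
    rw [hC₁, Int.mul_ediv_cancel' ((dv (m + 2)).mul_right (e ^ (m + 1) + 1))]
  have E4 : (e - 1) * (C₂ : ℤ) = (e - 1) + e * (e ^ (2 * m + 2) - 1) := by
    rw [hC₂]
    linear_combination Int.mul_ediv_cancel' ((dv (2 * m + 2)).mul_left e)
  have E5 : (e - 1) * (C₃ : ℤ) = (e ^ (m + 2) + 1) * (e ^ (m + 1) - 1) := by
    rw [hC₃, Int.mul_ediv_cancel' ((dv (m + 1)).mul_left (e ^ (m + 2) + 1))]
  have E6 : (e - 1) * (C₄ : ℤ)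
      = (e - 1) * (1 + e) + e ^ 2 * ((e ^ (m + 1) + 1) * (e ^ m - 1)) := by
    rw [hC₄]
    linear_combination Int.mul_ediv_cancel'
      (((dv m).mul_left (e ^ (m + 1) + 1)).mul_left (e ^ 2))
  have E7 : (e - 1) * (K.ncard : ℤ) = (e ^ (m + 2) - 1) * (e ^ (m + 3) + 1) := by
    rw [hcard, Int.mul_ediv_cancel' ((dv (m + 2)).mul_right (e ^ (m + 3) + 1))]
  have cancel : ∀ k : ℤ, (e - 1) * ((t : ℤ) * e ^ (m + 2)) = (e - 1) * (k * e ^ (m + 2))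
      → (t : ℤ) = k := by
    intro k h
    have h2 := mul_left_cancel₀ hne h
    exact mul_right_cancel₀ (pow_ne_zero _ hqne) h2
  refine ⟨?_, ?_, ?_, ?_⟩
  · intro hcC
    rw [htarget]
    have hcZ : (c : ℤ) = (C₁ : ℤ) := by exact_mod_cast hcC
    have : (t : ℤ) = 0 := by
      apply cancel
      linear_combination (t : ℤ) * E2 + ((e + 1) - (t : ℤ)) * E1 - (e - 1) * hmasterZ
        - e * (e - 1) * hcZ - e * E3 - E7
    exact_mod_cast this
  · intro hcC
    rw [htarget]
    have hcZ : (c : ℤ) = (C₂ : ℤ) := by exact_mod_cast hcC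
    have : (t : ℤ) = 1 := by
      apply cancel
      linear_combination (t : ℤ) * E2 + ((e + 1) - (t : ℤ)) * E1 - (e - 1) * hmasterZ
        - e * (e - 1) * hcZ - e * E4 - E7
    exact_mod_cast this
  · intro hcC
    rw [htarget]
    have hcZ : (c : ℤ) = (C₃ : ℤ) := by exact_mod_cast hcC
    have : (t : ℤ) = 2 := by
      apply cancel
      linear_combination (t : ℤ) * E2 + ((e + 1) - (t : ℤ)) * E1 - (e - 1) * hmasterZ
        - e * (e - 1) * hcZ - e * E5 - E7
    exact_mod_cast this
  · intro hcC
    rw [htarget]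
    have hcZ : (c : ℤ) = (C₄ : ℤ) := by exact_mod_cast hcC
    have : (t : ℤ) = e + 1 := by
      apply cancel
      linear_combination (t : ℤ) * E2 + ((e + 1) - (t : ℤ)) * E1 - (e - 1) * hmasterZ
        - e * (e - 1) * hcZ - e * E6 - E7
    rw [he] at this
    exact_mod_cast this
end
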